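/- arXiv:2508.13133 — 2 statements merged into one kernel-verified Lean document; each statement's English description precedes it below -/
import Mathlib

section
/- Let A be a T-brace. If the additive group of the ⋆-center ζ(⋆,A) is torsion-free, then the upper ⋆-hypercenter of A coincides with the ⋆-center: ζ_∞(⋆,A) = ζ(⋆,A). -/
/-!
Basic theory of left braces (skew left braces of abelian type), following
Dixon–Kurdachenko–Subbotin, "On the structure of braces whose subideals are ideals".
-/

universe u v

/-- A left brace: an abelian group `(A,+)`, a group `(A,·)`, satisfying
`a(b+c) = ab + ac - a`.  (The additive and multiplicative identities then coincide.) -/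
class LeftBrace (A : Type u) extends AddCommGroup A, Group A where
  mul_add_eq : ∀ a b c : A, a * (b + c) = a * b + a * c - a

namespace LeftBrace

variable {A : Type u} [LeftBrace A]

/-- The star operation `a ⋆ b = ab - a - b`. -/
def bstar (a b : A) : A := a * b - a - b

/-- A subset of a left brace is a subbrace if it is closed under the additive-group
and multiplicative-group operations (equivalently, it is a left brace under the
restricted operations). -/
structure IsSubbrace (S : Set A) : Prop where
  zero_mem : (0 : A) ∈ S
  add_mem : ∀ {a b : A}, a ∈ S → b ∈ S → a + b ∈ S
  neg_mem : ∀ {a : A}, a ∈ S → -a ∈ S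
  mul_mem : ∀ {a b : A}, a ∈ S → b ∈ S → a * b ∈ S
  inv_mem : ∀ {a : A}, a ∈ S → a⁻¹ ∈ S

/-- `I` is an ideal of the subbrace `J`: `I ⊆ J`, both are subbraces, and
`a ⋆ z, z ⋆ a ∈ I` for all `a ∈ J`, `z ∈ I`. -/
structure IsIdealIn (I J : Set A) : Prop where
  subset : I ⊆ J
  subbrace : IsSubbrace I
  ambient_subbrace : IsSubbrace J
  star_mem_left : ∀ a ∈ J, ∀ z ∈ I, bstar a z ∈ I
  star_mem_right : ∀ a ∈ J, ∀ z ∈ I, bstar z a ∈ I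

/-- `I` is an ideal of the brace `A`. -/
def IsIdeal (I : Set A) : Prop := IsIdealIn I (Set.univ : Set A)

/-- `A` is a T-brace if being an ideal is a transitive relation: an ideal of an
ideal of `A` is an ideal of `A`. -/
def IsTBrace (A : Type u) [LeftBrace A] : Prop :=
  ∀ I J : Set A, IsIdealIn I J → IsIdeal J → IsIdeal I

/-- The `⋆`-center `ζ(⋆,A) = {a | a ⋆ x = x ⋆ a = 0 for all x}`. -/
def starCenter (A : Type u) [LeftBrace A] : Set A :=
  {a : A | ∀ x : A, bstar a x = 0 ∧ bstar x a = 0}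

/-- The preimage in `A` of the `⋆`-center of the quotient of `A` by (the ideal) `S`:
`a` belongs to it iff `a ⋆ x ∈ S` and `x ⋆ a ∈ S` for every `x ∈ A`. -/
def nextCenter (A : Type u) [LeftBrace A] (S : Set A) : Set A :=
  {a : A | ∀ x : A, bstar a x ∈ S ∧ bstar x a ∈ S}

/-- The upper `⋆`-central series, indexed by naturals:
`ζ₀(⋆,A) = 0` and `ζ_{n+1}(⋆,A)/ζ_n(⋆,A) = ζ(⋆, A/ζ_n(⋆,A))`. -/
def zetaNat (A : Type u) [LeftBrace A] : ℕ → Set A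
  | 0 => ({0} : Set A)
  | n + 1 => nextCenter A (zetaNat A n)

/-- The upper `⋆`-central series, indexed by ordinals (unions at limit ordinals). -/
noncomputable def zetaOrd (A : Type u) [LeftBrace A] (o : Ordinal.{v}) : Set A :=
  Ordinal.limitRecOn o (({0} : Set A))
    (fun _ ih => nextCenter A ih)
    (fun o _ ih => ⋃ (o' : Ordinal) (h : o' < o), ih o' h)

/-- The upper `⋆`-hypercenter `ζ_∞(⋆,A)`: the final (stable) term of the upper
`⋆`-central series, i.e. the union of all its terms. -/
noncomputable def starHypercenter (A : Type u) [LeftBrace A] : Set A :=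
  ⋃ o : Ordinal.{u}, zetaOrd A o

/-- `A` is `⋆`-hypercentral if `A = ζ_γ(⋆,A)` for some ordinal `γ`. -/
def IsStarHypercentral (A : Type u) [LeftBrace A] : Prop :=
  ∃ γ : Ordinal.{u}, zetaOrd A γ = (Set.univ : Set A)

/-- `K ⋆ L`: the additive subgroup of `(A,+)` generated by all `x ⋆ y`, `x ∈ K`, `y ∈ L`. -/
def setStar (K L : Set A) : AddSubgroup A :=
  AddSubgroup.closure {z : A | ∃ x ∈ K, ∃ y ∈ L, z = bstar x y}

/-- `rightStarSeries A n = A^{(n+1)}`, where `A^{(1)} = A` and `A^{(n+1)} = A^{(n)} ⋆ A`. -/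
def rightStarSeries (A : Type u) [LeftBrace A] : ℕ → Set A
  | 0 => (Set.univ : Set A)
  | n + 1 => ((setStar (rightStarSeries A n) (Set.univ : Set A) : AddSubgroup A) : Set A)

/-- `leftStarSeries A n = A^{n+1}`, where `A^1 = A` and `A^{n+1} = A ⋆ A^n`. -/
def leftStarSeries (A : Type u) [LeftBrace A] : ℕ → Set A
  | 0 => (Set.univ : Set A)
  | n + 1 => ((setStar (Set.univ : Set A) (leftStarSeries A n) : AddSubgroup A) : Set A)

/-- `A` is Smoktunowicz-nilpotent if `A^{(n)} = A^k = 0` for some naturals `n, k`. -/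
def IsSmoktunowiczNilpotent (A : Type u) [LeftBrace A] : Prop :=
  ∃ n k : ℕ, rightStarSeries A n = ({0} : Set A) ∧ leftStarSeries A k = ({0} : Set A)

/-- The subbrace generated by a subset `M`: the intersection of all subbraces containing `M`. -/
def braceClosure (M : Set A) : Set A := ⋂₀ {S : Set A | IsSubbrace S ∧ M ⊆ S}

end LeftBrace

/-!
For `a` in the second `⋆`-center `ζ₂` and `z` in the `⋆`-center `ζ`, one has
`(k • a + z) ⋆ x = k • (a ⋆ x)` and `x ⋆ (k • a + z) = k • (x ⋆ a)`. Hence, with `b = 2 • a`, the set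
`J = ℤb + 2ζ` is an ideal of `A` and `I = ℤb + ℤ(b ⋆ b)` is an ideal of `J`; in a T-brace `I` is
then an ideal of `A`, so `2 • (x ⋆ a)` and `2 • (a ⋆ x)` lie in `ℤ(2a) + ℤ(4 • (a ⋆ a))`.
A nonzero multiple of `a` in `ζ` already makes `a` central, by torsion-freeness. Otherwise the
coefficient of `2a` vanishes, and cancelling `2` in the torsion-free group `ζ` leaves
`x ⋆ a, a ⋆ x ∈ 2ℤ(a ⋆ a)`. For `x = a` this reads `a ⋆ a ∈ 2ℤ(a ⋆ a)`, so `a ⋆ a = 0` and `a`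
is central. Thus `ζ₂ = ζ`, and the upper `⋆`-central series is constant from `ζ` on.
-/

theorem AddSubgroup.mem_zmultiples_sup {G : Type*} [AddCommGroup G] {b u : G}
    {Z : AddSubgroup G} :
    u ∈ zmultiples b ⊔ Z ↔ ∃ k : ℤ, ∃ z ∈ Z, k • b + z = u := by
  simp only [mem_sup, mem_zmultiples_iff, exists_exists_eq_and]

theorem AddSubgroup.zsmul_add_mem_zmultiples_sup {G : Type*} [AddCommGroup G] {b z : G}
    {Z : AddSubgroup G} (hz : z ∈ Z) (k : ℤ) : k • b + z ∈ zmultiples b ⊔ Z :=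
  mem_zmultiples_sup.mpr ⟨k, z, hz, rfl⟩

namespace LeftBrace

open AddSubgroup

variable {A : Type u} [LeftBrace A]

local infixl:70 " ⋆ " => bstar

theorem mul_zero_eq_self (a : A) : a * 0 = a := by
  have h := mul_add_eq a 0 0
  rw [add_zero, add_sub_assoc, left_eq_add, sub_eq_zero] at h
  exact h

theorem one_eq_zero : (1 : A) = 0 := by
  simpa using (mul_zero_eq_self (1 : A)).symm

theorem zero_mul_eq_self (a : A) : 0 * a = a := by
  rw [← one_eq_zero, one_mul]

theorem mul_eq_add_add_bstar (a b : A) : a * b = a + b + a ⋆ b := by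
  simp only [bstar]; abel

theorem bstar_zero_left (a : A) : 0 ⋆ a = 0 := by
  simp [bstar, zero_mul_eq_self]

theorem bstar_zero_right (a : A) : a ⋆ 0 = 0 := by
  simp [bstar, mul_zero_eq_self]

theorem bstar_add_right (a b c : A) : a ⋆ (b + c) = a ⋆ b + a ⋆ c := by
  simp only [bstar, mul_add_eq]; abel

theorem bstar_mul_left (a b c : A) : (a * b) ⋆ c = a ⋆ c + a ⋆ (b ⋆ c) + b ⋆ c := by
  have h : a * b * c = a * b + (a * c + a * (b ⋆ c) - a) - a := by
    rw [mul_assoc, mul_eq_add_add_bstar b, add_assoc, mul_add_eq, mul_add_eq]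
  simp only [bstar] at h ⊢
  rw [h]; abel

def bstarLeftAddHom (x : A) : A →+ A :=
  AddMonoidHom.mk' (bstar x) (bstar_add_right x)

theorem bstar_neg_right (x b : A) : x ⋆ -b = -(x ⋆ b) :=
  map_neg (bstarLeftAddHom x) b

theorem bstar_zsmul_right (x : A) (k : ℤ) (b : A) : x ⋆ (k • b) = k • (x ⋆ b) :=
  map_zsmul (bstarLeftAddHom x) k b

theorem mul_eq_add_of_mem_starCenter {z : A} (hz : z ∈ starCenter A) (u : A) :
    z * u = z + u := by
  rw [mul_eq_add_add_bstar, (hz u).1, add_zero]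

theorem add_bstar_of_mem_starCenter {z : A} (hz : z ∈ starCenter A) (u x : A) :
    (z + u) ⋆ x = u ⋆ x := by
  rw [← mul_eq_add_of_mem_starCenter hz, bstar_mul_left, (hz _).1, (hz _).1, zero_add, zero_add]

theorem inv_bstar_of_bstar_mem_starCenter {a x : A} (h : a ⋆ x ∈ starCenter A) :
    a⁻¹ ⋆ x = -(a ⋆ x) := by
  have h0 := bstar_mul_left a⁻¹ a x
  rw [inv_mul_cancel, one_eq_zero, bstar_zero_left, (h a⁻¹).2, add_zero] at h0
  exact eq_neg_of_add_eq_zero_left h0.symm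

theorem zero_mem_starCenter : (0 : A) ∈ starCenter A :=
  fun x => ⟨bstar_zero_left x, bstar_zero_right x⟩

variable (A) in
def starCenterAddSubgroup : AddSubgroup A where
  carrier := starCenter A
  zero_mem' := zero_mem_starCenter
  add_mem' {z w} hz hw x := by
    refine ⟨by rw [add_bstar_of_mem_starCenter hz, (hw x).1], ?_⟩
    rw [bstar_add_right, (hz x).2, (hw x).2, add_zero]
  neg_mem' {z} hz x := by
    have hinv : z⁻¹ = -z := inv_eq_of_mul_eq_one_right <| by
      rw [mul_eq_add_of_mem_starCenter hz, add_neg_cancel, one_eq_zero]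
    have hzx : z ⋆ x ∈ starCenter A := (hz x).1 ▸ zero_mem_starCenter
    refine ⟨?_, by rw [bstar_neg_right, (hz x).2, neg_zero]⟩
    rw [← hinv, inv_bstar_of_bstar_mem_starCenter hzx, (hz x).1, neg_zero]

theorem add_bstar_of_mem_nextCenter {u v : A} (hu : u ∈ nextCenter A (starCenter A))
    (hv : v ∈ nextCenter A (starCenter A)) (x : A) : (u + v) ⋆ x = u ⋆ x + v ⋆ x := by
  have huv : u + v = -(u ⋆ v) + u * v := by rw [mul_eq_add_add_bstar]; abel
  rw [huv, add_bstar_of_mem_starCenter ((starCenterAddSubgroup A).neg_mem (hu v).1),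
    bstar_mul_left, ((hv x).1 u).2, add_zero]

theorem neg_bstar_of_mem_nextCenter {a : A} (ha : a ∈ nextCenter A (starCenter A)) (x : A) :
    (-a) ⋆ x = -(a ⋆ x) := by
  have hneg : -a = a ⋆ a⁻¹ + a⁻¹ := by
    have h := mul_eq_add_add_bstar a a⁻¹
    rw [mul_inv_cancel, one_eq_zero] at h
    rw [neg_eq_iff_add_eq_zero, h]; abel
  rw [hneg, add_bstar_of_mem_starCenter (ha a⁻¹).1, inv_bstar_of_bstar_mem_starCenter (ha x).1]

variable (A) in
def secondStarCenter : AddSubgroup A where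
  carrier := nextCenter A (starCenter A)
  zero_mem' x := by simp only [bstar_zero_left, bstar_zero_right, zero_mem_starCenter, and_self]
  add_mem' {u v} hu hv x := by
    rw [add_bstar_of_mem_nextCenter hu hv, bstar_add_right]
    exact ⟨(starCenterAddSubgroup A).add_mem (hu x).1 (hv x).1,
      (starCenterAddSubgroup A).add_mem (hu x).2 (hv x).2⟩
  neg_mem' {a} ha x := by
    rw [neg_bstar_of_mem_nextCenter ha, bstar_neg_right]
    exact ⟨(starCenterAddSubgroup A).neg_mem (ha x).1,
      (starCenterAddSubgroup A).neg_mem (ha x).2⟩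

/-- Unlike `x ⋆ ·`, the map `· ⋆ x` is only additive on the second `⋆`-center. -/
def bstarRightAddHom (x : A) : secondStarCenter A →+ A :=
  AddMonoidHom.mk' (fun u => (u : A) ⋆ x) fun u v => add_bstar_of_mem_nextCenter u.2 v.2 x

theorem zsmul_bstar {a : A} (ha : a ∈ nextCenter A (starCenter A)) (k : ℤ) (x : A) :
    (k • a) ⋆ x = k • (a ⋆ x) :=
  map_zsmul (bstarRightAddHom x) k ⟨a, ha⟩

theorem zsmul_bstar_zsmul {a : A} (ha : a ∈ nextCenter A (starCenter A)) (m n : ℤ) :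
    (m • a) ⋆ (n • a) = (m * n) • (a ⋆ a) := by
  rw [zsmul_bstar ha, bstar_zsmul_right, smul_smul]

theorem zsmul_add_bstar {a z : A} (ha : a ∈ nextCenter A (starCenter A)) (hz : z ∈ starCenter A)
    (k : ℤ) (x : A) : (k • a + z) ⋆ x = k • (a ⋆ x) := by
  rw [add_comm, add_bstar_of_mem_starCenter hz, zsmul_bstar ha]

theorem bstar_zsmul_add {a z : A} (hz : z ∈ starCenter A) (k : ℤ) (x : A) :
    x ⋆ (k • a + z) = k • (x ⋆ a) := by
  rw [bstar_add_right, bstar_zsmul_right, (hz x).2, add_zero]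

theorem zsmul_add_mul_zsmul_add {a z w : A} (ha : a ∈ nextCenter A (starCenter A))
    (hz : z ∈ starCenter A) (hw : w ∈ starCenter A) (k l : ℤ) :
    (k • a + z) * (l • a + w) = (k + l) • a + (z + w + (k * l) • (a ⋆ a)) := by
  rw [mul_eq_add_add_bstar, zsmul_add_bstar ha hz, bstar_zsmul_add hw, smul_smul]
  module

theorem inv_zsmul_add {a z : A} (ha : a ∈ nextCenter A (starCenter A))
    (hz : z ∈ starCenter A) (k : ℤ) :
    (k • a + z)⁻¹ = (-k) • a + (-z + (k * k) • (a ⋆ a)) := by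
  have hw : -z + (k * k) • (a ⋆ a) ∈ starCenter A :=
    (starCenterAddSubgroup A).add_mem ((starCenterAddSubgroup A).neg_mem hz)
      ((starCenterAddSubgroup A).zsmul_mem (ha a).1 _)
  refine inv_eq_of_mul_eq_one_right ?_
  rw [zsmul_add_mul_zsmul_add ha hz hw, one_eq_zero]
  module

theorem isSubbrace_univ : IsSubbrace (Set.univ : Set A) :=
  ⟨trivial, fun _ _ => trivial, fun _ => trivial, fun _ _ => trivial, fun _ => trivial⟩

theorem isSubbrace_zmultiples_sup {b : A} (hb : b ∈ nextCenter A (starCenter A))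
    {Z : AddSubgroup A} (hZ : (Z : Set A) ⊆ starCenter A) (hbb : b ⋆ b ∈ Z) :
    IsSubbrace ((zmultiples b ⊔ Z : AddSubgroup A) : Set A) := by
  refine ⟨zero_mem _, add_mem, neg_mem, fun hu hv => ?_, fun hu => ?_⟩
  · obtain ⟨k, z, hz, rfl⟩ := mem_zmultiples_sup.mp hu
    obtain ⟨l, w, hw, rfl⟩ := mem_zmultiples_sup.mp hv
    rw [zsmul_add_mul_zsmul_add hb (hZ hz) (hZ hw)]
    exact zsmul_add_mem_zmultiples_sup (add_mem (add_mem hz hw) (zsmul_mem hbb _)) _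
  · obtain ⟨k, z, hz, rfl⟩ := mem_zmultiples_sup.mp hu
    rw [inv_zsmul_add hb (hZ hz)]
    exact zsmul_add_mem_zmultiples_sup (add_mem (neg_mem hz) (zsmul_mem hbb _)) _

theorem isIdealIn_zmultiples_sup {b : A} (hb : b ∈ nextCenter A (starCenter A))
    {Z Z' : AddSubgroup A} (hZ' : (Z' : Set A) ⊆ starCenter A) (hZZ' : Z ≤ Z')
    (hbb : b ⋆ b ∈ Z) :
    IsIdealIn ((zmultiples b ⊔ Z : AddSubgroup A) : Set A)
      (zmultiples b ⊔ Z' : AddSubgroup A) := by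
  refine ⟨sup_le_sup_left hZZ' _, isSubbrace_zmultiples_sup hb (fun _ h => hZ' (hZZ' h)) hbb,
    isSubbrace_zmultiples_sup hb hZ' (hZZ' hbb), fun u hu v hv => ?_, fun u hu v hv => ?_⟩
  all_goals
    obtain ⟨k, z, hz, rfl⟩ := mem_zmultiples_sup.mp hu
    obtain ⟨l, w, hw, rfl⟩ := mem_zmultiples_sup.mp hv
    refine mem_sup_right ?_
  · rw [zsmul_add_bstar hb (hZ' hz), bstar_zsmul_add (hZ' (hZZ' hw))]
    exact zsmul_mem (zsmul_mem hbb _) _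
  · rw [zsmul_add_bstar hb (hZ' (hZZ' hw)), bstar_zsmul_add (hZ' hz)]
    exact zsmul_mem (zsmul_mem hbb _) _

theorem nextCenter_mono {S T : Set A} (h : S ⊆ T) : nextCenter A S ⊆ nextCenter A T :=
  fun _ ha x => ⟨h (ha x).1, h (ha x).2⟩

theorem isIdeal_zmultiples_sup {b : A} {Z : AddSubgroup A} (hZ : (Z : Set A) ⊆ starCenter A)
    (hb : b ∈ nextCenter A Z) : IsIdeal ((zmultiples b ⊔ Z : AddSubgroup A) : Set A) := by
  have hb' : b ∈ nextCenter A (starCenter A) := nextCenter_mono hZ hb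
  refine ⟨Set.subset_univ _, isSubbrace_zmultiples_sup hb' hZ (hb b).1, isSubbrace_univ,
    fun x _ u hu => ?_, fun x _ u hu => ?_⟩
  all_goals
    obtain ⟨k, z, hz, rfl⟩ := mem_zmultiples_sup.mp hu
    refine mem_sup_right ?_
  · rw [bstar_zsmul_add (hZ hz)]
    exact zsmul_mem (hb x).2 _
  · rw [zsmul_add_bstar hb' (hZ hz)]
    exact zsmul_mem (hb x).1 _

/-- `ℤb + ℤ(b ⋆ b)` is an ideal of the ideal `ℤb + Z`, hence, in a T-brace, an ideal of `A`. -/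
theorem mem_nextCenter_zmultiples_sup_of_isTBrace (hT : IsTBrace A) {b : A}
    {Z : AddSubgroup A} (hZ : (Z : Set A) ⊆ starCenter A) (hb : b ∈ nextCenter A Z) :
    b ∈ nextCenter A (zmultiples b ⊔ zmultiples (b ⋆ b) : AddSubgroup A) := by
  have hI := hT _ _ (isIdealIn_zmultiples_sup (nextCenter_mono hZ hb) hZ
    (zmultiples_le_of_mem (hb b).1) (mem_zmultiples _)) (isIdeal_zmultiples_sup hZ hb)
  have hbI : b ∈ zmultiples b ⊔ zmultiples (b ⋆ b) := mem_sup_left (mem_zmultiples b)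
  exact fun x => ⟨hI.star_mem_right x trivial b hbI, hI.star_mem_left x trivial b hbI⟩

theorem two_zsmul_mem_nextCenter {a : A} (ha : a ∈ nextCenter A (starCenter A)) :
    (2 : ℤ) • a ∈ nextCenter A ((starCenterAddSubgroup A).map (zsmulAddGroupHom 2)) :=
  fun x => ⟨⟨a ⋆ x, (ha x).1, (zsmul_bstar ha 2 x).symm⟩,
    ⟨x ⋆ a, (ha x).2, (bstar_zsmul_right x 2 a).symm⟩⟩

theorem map_zsmulAddGroupHom_starCenter_subset (m : ℤ) :
    ((starCenterAddSubgroup A).map (zsmulAddGroupHom m) : Set A) ⊆ starCenter A := by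
  rintro _ ⟨z, hz, rfl⟩
  exact (starCenterAddSubgroup A).zsmul_mem hz m

theorem eq_zero_of_zsmul_eq_zero_of_mem_starCenter
    (hfree : ∀ a ∈ starCenter A, a ≠ 0 → ¬ IsOfFinAddOrder a) {z : A} (hz : z ∈ starCenter A)
    {m : ℤ} (hm : m ≠ 0) (h : m • z = 0) : z = 0 := by
  by_contra hne
  exact hfree z hz hne (isOfFinAddOrder_iff_zsmul_eq_zero.mpr ⟨m, hm, h⟩)

theorem mem_starCenter_of_zsmul_mem
    (hfree : ∀ a ∈ starCenter A, a ≠ 0 → ¬ IsOfFinAddOrder a) {a : A}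
    (ha : a ∈ nextCenter A (starCenter A)) {m : ℤ} (hm : m ≠ 0) (hma : m • a ∈ starCenter A) :
    a ∈ starCenter A := fun x =>
  ⟨eq_zero_of_zsmul_eq_zero_of_mem_starCenter hfree (ha x).1 hm
      (by rw [← zsmul_bstar ha]; exact (hma x).1),
    eq_zero_of_zsmul_eq_zero_of_mem_starCenter hfree (ha x).2 hm
      (by rw [← bstar_zsmul_right]; exact (hma x).2)⟩

theorem exists_eq_two_mul_zsmul_bstar_self
    (hfree : ∀ a ∈ starCenter A, a ≠ 0 → ¬ IsOfFinAddOrder a)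
    {a : A} (ha : a ∈ nextCenter A (starCenter A)) (ha' : a ∉ starCenter A)
    {w : A} (hw : w ∈ starCenter A)
    (h2w : (2 : ℤ) • w ∈ zmultiples ((2 : ℤ) • a) ⊔ zmultiples ((2 * 2 : ℤ) • (a ⋆ a))) :
    ∃ q : ℤ, w = (2 * q) • (a ⋆ a) := by
  let Z := starCenterAddSubgroup A
  have hs : a ⋆ a ∈ Z := (ha a).1
  obtain ⟨k, _, ⟨q, rfl⟩, hkq⟩ := mem_zmultiples_sup.mp h2w
  have hk : k * 2 = 0 := by
    by_contra hk
    refine ha' (mem_starCenter_of_zsmul_mem hfree ha hk ?_)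
    have h : (k * 2) • a = (2 : ℤ) • w - q • (2 * 2 : ℤ) • (a ⋆ a) := by
      rw [← hkq]; module
    rw [h]
    exact Z.sub_mem (Z.zsmul_mem hw 2) (Z.zsmul_mem (Z.zsmul_mem hs _) _)
  refine ⟨q, eq_of_sub_eq_zero (eq_zero_of_zsmul_eq_zero_of_mem_starCenter hfree
    (Z.sub_mem hw (Z.zsmul_mem hs _)) two_ne_zero ?_)⟩
  rw [smul_sub, ← hkq, show k = 0 by omega]
  module

theorem nextCenter_starCenter_subset (hT : IsTBrace A)
    (hfree : ∀ a ∈ starCenter A, a ≠ 0 → ¬ IsOfFinAddOrder a) :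
    nextCenter A (starCenter A) ⊆ starCenter A := by
  intro a ha
  by_contra ha'
  have hI := mem_nextCenter_zmultiples_sup_of_isTBrace hT
    (map_zsmulAddGroupHom_starCenter_subset 2) (two_zsmul_mem_nextCenter ha)
  rw [zsmul_bstar_zsmul ha] at hI
  have hstar : ∀ x,
      (∃ q : ℤ, a ⋆ x = (2 * q) • (a ⋆ a)) ∧ ∃ q : ℤ, x ⋆ a = (2 * q) • (a ⋆ a) :=
    fun x => ⟨exists_eq_two_mul_zsmul_bstar_self hfree ha ha' (ha x).1
        (zsmul_bstar ha 2 x ▸ (hI x).1),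
      exists_eq_two_mul_zsmul_bstar_self hfree ha ha' (ha x).2
        (bstar_zsmul_right x 2 a ▸ (hI x).2)⟩
  have hs0 : a ⋆ a = 0 := by
    obtain ⟨q, hq⟩ := (hstar a).1
    refine eq_zero_of_zsmul_eq_zero_of_mem_starCenter hfree (ha a).1 (m := 1 - 2 * q)
      (by omega) ?_
    rw [sub_smul, one_smul, ← hq, sub_self]
  refine ha' fun x => ⟨?_, ?_⟩
  · obtain ⟨q, hq⟩ := (hstar x).1
    rw [hq, hs0, smul_zero]
  · obtain ⟨q, hq⟩ := (hstar x).2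
    rw [hq, hs0, smul_zero]

theorem zetaOrd_zero : zetaOrd A (0 : Ordinal.{v}) = {0} :=
  Ordinal.limitRecOn_zero _ _ _

theorem zetaOrd_add_one (o : Ordinal.{v}) :
    zetaOrd A (o + 1) = nextCenter A (zetaOrd A o) :=
  Ordinal.limitRecOn_add_one _ _ _ _

theorem zetaOrd_limit {o : Ordinal.{v}} (ho : Order.IsSuccLimit o) :
    zetaOrd A o = ⋃ (o' : Ordinal) (_ : o' < o), zetaOrd A o' :=
  Ordinal.limitRecOn_limit _ _ _ _ ho

theorem starCenter_subset_zetaOrd_one : starCenter A ⊆ zetaOrd A (1 : Ordinal.{v}) := by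
  rw [← zero_add 1, zetaOrd_add_one, zetaOrd_zero]
  exact fun z hz x => hz x

theorem zetaOrd_subset_starCenter (hT : IsTBrace A)
    (hfree : ∀ a ∈ starCenter A, a ≠ 0 → ¬ IsOfFinAddOrder a) (o : Ordinal.{v}) :
    zetaOrd A o ⊆ starCenter A := by
  induction o using Ordinal.limitRecOn with
  | zero => rw [zetaOrd_zero, Set.singleton_subset_iff]; exact zero_mem_starCenter
  | add_one o ih =>
    rw [zetaOrd_add_one]
    exact (nextCenter_mono ih).trans (nextCenter_starCenter_subset hT hfree)
  | limit o hlim ih => rw [zetaOrd_limit hlim]; exact Set.iUnion₂_subset ih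

end LeftBrace

open LeftBrace in
/-- **Theorem A.** If `A` is a T-brace and the additive group of the `⋆`-center of `A`
is torsion-free, then the upper `⋆`-hypercenter coincides with the `⋆`-center. -/
theorem starHypercenter_eq_starCenter_of_torsionFree_starCenter
    {A : Type u} [LeftBrace A] (hT : IsTBrace A)
    (hfree : ∀ a ∈ starCenter A, a ≠ 0 → ¬ IsOfFinAddOrder a) :
    starHypercenter A = starCenter A :=
  (Set.iUnion_subset (zetaOrd_subset_starCenter hT hfree)).antisymm
    (starCenter_subset_zetaOrd_one.trans (Set.subset_iUnion (zetaOrd A) 1))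
end

section
/- Let A be a left brace and let a ∈ A be an element of infinite additive order. Let c = a ⋆ a and suppose a ⋆ c = 0. Then ⟨a⟩ ∩ ⟨c⟩ = 0. In particular, if a ∈ ζ₂(⋆,A) has infinite additive order, then ⟨a⟩ ∩ ⟨a ⋆ a⟩ = 0. -/
/-!
Basic theory of left braces (skew left braces of abelian type), following
Dixon–Kurdachenko–Subbotin, "On the structure of braces whose subideals are ideals".
-/

universe u v

/-!
Let `λ_a x = a * x - a = a ⋆ x + x`, an additive endomorphism of `A`. With `c = a ⋆ a` and
`a ⋆ c = 0` it sends `a ↦ a + c` and fixes `c`. If `x = n • a = m • c`, applying `λ_a` gives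
`n • c = 0`, hence `n • x = 0` and `(n * n) • a = 0`; as `a` has infinite order, `n = 0` and `x = 0`.
-/

theorem AddSubgroup.zmultiples_inf_zmultiples_eq_bot_of_map_eq_add {G : Type*} [AddCommGroup G]
    (f : G →+ G) {a c : G} (ha : ¬ IsOfFinAddOrder a) (hfa : f a = c + a) (hfc : f c = c) :
    AddSubgroup.zmultiples a ⊓ AddSubgroup.zmultiples c = ⊥ := by
  refine eq_bot_iff.mpr fun x hx => ?_
  obtain ⟨⟨n, rfl⟩, ⟨m, hm⟩⟩ := AddSubgroup.mem_inf.mp hx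
  beta_reduce at hm
  have hnc : n • c = 0 := by
    have hfx : f (n • a) = n • c + n • a := by rw [map_zsmul, hfa, smul_add]
    rwa [← hm, map_zsmul, hfc, hm, right_eq_add] at hfx
  have hnna : (n * n) • a = 0 := by rw [mul_smul, ← hm, smul_comm, hnc, smul_zero]
  have hn : n = 0 := by
    by_contra hn
    exact ha (isOfFinAddOrder_iff_zsmul_eq_zero.mpr ⟨n * n, mul_ne_zero hn hn, hnna⟩)
  simp [hn]

namespace LeftBrace

variable {A : Type u} [LeftBrace A]

def lambda (a : A) : A →+ A :=
  AddMonoidHom.mk' (fun x => a * x - a) fun x y => by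
    simp only [mul_add_eq]
    abel

theorem lambda_apply (a x : A) : lambda a x = bstar a x + x := by
  simp only [lambda, AddMonoidHom.mk'_apply, bstar]
  abel

theorem zmultiples_inf_zmultiples_bstar_self_eq_bot_of_bstar_eq_zero {a : A}
    (ha : ¬ IsOfFinAddOrder a) (hac : bstar a (bstar a a) = 0) :
    AddSubgroup.zmultiples a ⊓ AddSubgroup.zmultiples (bstar a a) = ⊥ :=
  AddSubgroup.zmultiples_inf_zmultiples_eq_bot_of_map_eq_add (lambda a) ha (lambda_apply a a)
    (by rw [lambda_apply, hac, zero_add])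

theorem bstar_bstar_self_eq_zero_of_mem_zetaNat_two {a : A} (ha : a ∈ zetaNat A 2) :
    bstar a (bstar a a) = 0 :=
  ((ha a).1 a).2

end LeftBrace

open LeftBrace in
/-- **Proposition.** Let `A` be a left brace, `a` of infinite additive order,
`c = a ⋆ a` with `a ⋆ c = 0`.  Then `⟨a⟩ ∩ ⟨c⟩ = 0`.  In particular, if `a ∈ ζ₂(⋆,A)`
has infinite additive order, then `⟨a⟩ ∩ ⟨a ⋆ a⟩ = 0`. -/
theorem zmultiples_inf_zmultiples_bstar_self_eq_bot
    {A : Type u} [LeftBrace A] :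
    (∀ a : A, ¬ IsOfFinAddOrder a → bstar a (bstar a a) = 0 →
      AddSubgroup.zmultiples a ⊓ AddSubgroup.zmultiples (bstar a a) = ⊥) ∧
    (∀ a : A, a ∈ zetaNat A 2 → ¬ IsOfFinAddOrder a →
      AddSubgroup.zmultiples a ⊓ AddSubgroup.zmultiples (bstar a a) = ⊥) :=
  ⟨fun _ => zmultiples_inf_zmultiples_bstar_self_eq_bot_of_bstar_eq_zero,
    fun _ ha2 ha => zmultiples_inf_zmultiples_bstar_self_eq_bot_of_bstar_eq_zero ha
      (bstar_bstar_self_eq_zero_of_mem_zetaNat_two ha2)⟩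
end
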